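/- arXiv:2205.00519 — 8 statements merged into one kernel-verified Lean document; each statement's English description precedes it below -/
import Mathlib

section
/- Let n be a positive integer, T ≥ 0 and δ ≥ 0. Let H, H' : ℝ → Matrix (Fin n) (Fin n) ℂ be time-dependent Hamiltonians (H(t) and H'(t) Hermitian for every t ∈ [0,T]) and let ψ, ψ' : ℝ → EuclideanSpace ℂ (Fin n) solve the Schrödinger equation for H and H' respectively on [0,T], with ψ(0) = ψ'(0) and ‖ψ(0)‖ = 1. If ‖H(t) − H'(t)‖ ≤ δ (spectral norm) for all t ∈ [0,T], then ‖ψ(T) − ψ'(T)‖ ≤ √(2 T δ). -/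
open scoped Matrix.Norms.L2Operator InnerProductSpace

/-!
For solutions `ψ, φ` of `ψ' = -i A ψ`, `φ' = -i B φ` with `A` symmetric, the overlap satisfies
`d/dt ⟪ψ, φ⟫ = i ⟪ψ, (A - B) φ⟫`. Taking `φ = ψ` shows that the evolution preserves norms; for
normalized states the overlap therefore moves at speed at most `‖A - B‖ ≤ δ`, so after time `T`
its real part is at least `1 - T δ`, and `‖ψ - φ‖² = 2 - 2 re ⟪ψ, φ⟫ ≤ 2 T δ`.
-/

open Complex Set

section SchrodingerEquation

variable {E : Type*} [NormedAddCommGroup E] [InnerProductSpace ℂ E]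

theorem hasDerivAt_inner_of_schrodinger {ψ φ : ℝ → E} {A B : E →L[ℂ] E} {t : ℝ}
    (hA : (A : E →ₗ[ℂ] E).IsSymmetric) (hψ : HasDerivAt ψ (-I • A (ψ t)) t)
    (hφ : HasDerivAt φ (-I • B (φ t)) t) :
    HasDerivAt (fun s => ⟪ψ s, φ s⟫_ℂ) (I * ⟪ψ t, (A - B) (φ t)⟫_ℂ) t := by
  refine (hψ.inner ℂ hφ).congr_deriv ?_
  have hAψ : ⟪A (ψ t), φ t⟫_ℂ = ⟪ψ t, A (φ t)⟫_ℂ := hA (ψ t) (φ t)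
  rw [inner_smul_left, inner_smul_right, hAψ, sub_apply, inner_sub_right]
  simp only [map_neg, conj_I, neg_neg]
  ring

variable {ψ φ : ℝ → E} {A B : ℝ → E →L[ℂ] E} {T C δ : ℝ}

theorem norm_inner_sub_inner_le_of_schrodinger
    (hA : ∀ t ∈ Icc 0 T, (A t : E →ₗ[ℂ] E).IsSymmetric)
    (hψ : ∀ t ∈ Icc 0 T, HasDerivAt ψ (-I • A t (ψ t)) t)
    (hφ : ∀ t ∈ Icc 0 T, HasDerivAt φ (-I • B t (φ t)) t)
    (hC : ∀ t ∈ Icc 0 T, ‖ψ t‖ * ‖A t - B t‖ * ‖φ t‖ ≤ C) :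
    ∀ t ∈ Icc 0 T, ‖⟪ψ t, φ t⟫_ℂ - ⟪ψ 0, φ 0⟫_ℂ‖ ≤ C * t := by
  have hbound (s : ℝ) (hs : s ∈ Ico 0 T) : ‖I * ⟪ψ s, (A s - B s) (φ s)⟫_ℂ‖ ≤ C := by
    replace hs := Ico_subset_Icc_self hs
    calc ‖I * ⟪ψ s, (A s - B s) (φ s)⟫_ℂ‖ = ‖⟪ψ s, (A s - B s) (φ s)⟫_ℂ‖ := by
          rw [norm_mul, norm_I, one_mul]
      _ ≤ ‖ψ s‖ * (‖A s - B s‖ * ‖φ s‖) :=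
          (norm_inner_le_norm _ _).trans (by gcongr; exact (A s - B s).le_opNorm _)
      _ ≤ C := by rw [← mul_assoc]; exact hC s hs
  intro t ht
  simpa only [sub_zero] using norm_image_sub_le_of_norm_deriv_le_segment'
    (fun s hs => (hasDerivAt_inner_of_schrodinger (hA s hs) (hψ s hs) (hφ s hs)).hasDerivWithinAt)
    hbound t ht

theorem norm_eq_of_schrodinger
    (hA : ∀ t ∈ Icc 0 T, (A t : E →ₗ[ℂ] E).IsSymmetric)
    (hψ : ∀ t ∈ Icc 0 T, HasDerivAt ψ (-I • A t (ψ t)) t) :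
    ∀ t ∈ Icc 0 T, ‖ψ t‖ = ‖ψ 0‖ := by
  intro t ht
  have hconst := norm_inner_sub_inner_le_of_schrodinger (C := 0) hA hψ hψ
    (fun s _ => by simp) t ht
  rw [zero_mul, norm_le_zero_iff, sub_eq_zero, inner_self_eq_norm_sq_to_K,
    inner_self_eq_norm_sq_to_K] at hconst
  exact (sq_eq_sq₀ (norm_nonneg _) (norm_nonneg _)).1 (mod_cast hconst)

theorem norm_sub_le_sqrt_of_schrodinger (hT : 0 ≤ T)
    (hA : ∀ t ∈ Icc 0 T, (A t : E →ₗ[ℂ] E).IsSymmetric)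
    (hB : ∀ t ∈ Icc 0 T, (B t : E →ₗ[ℂ] E).IsSymmetric)
    (hψ : ∀ t ∈ Icc 0 T, HasDerivAt ψ (-I • A t (ψ t)) t)
    (hφ : ∀ t ∈ Icc 0 T, HasDerivAt φ (-I • B t (φ t)) t)
    (h0 : ψ 0 = φ 0) (hnorm : ‖ψ 0‖ = 1) (hAB : ∀ t ∈ Icc 0 T, ‖A t - B t‖ ≤ δ) :
    ‖ψ T - φ T‖ ≤ Real.sqrt (2 * T * δ) := by
  have hψ1 : ∀ t ∈ Icc 0 T, ‖ψ t‖ = 1 := fun t ht => (norm_eq_of_schrodinger hA hψ t ht).trans hnorm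
  have hφ1 : ∀ t ∈ Icc 0 T, ‖φ t‖ = 1 := fun t ht =>
    (norm_eq_of_schrodinger hB hφ t ht).trans (h0 ▸ hnorm)
  have hT' : T ∈ Icc 0 T := right_mem_Icc.2 hT
  have hdrift := norm_inner_sub_inner_le_of_schrodinger hA hψ hφ
    (fun t ht => by rw [hψ1 t ht, hφ1 t ht, one_mul, mul_one]; exact hAB t ht) T hT'
  have hinit : ⟪ψ 0, φ 0⟫_ℂ = 1 := by
    rw [← h0, inner_self_eq_norm_sq_to_K, hnorm]
    norm_num
  have hre : 1 - δ * T ≤ re ⟪ψ T, φ T⟫_ℂ := by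
    have := (abs_re_le_norm _).trans hdrift
    rw [hinit, sub_re, one_re] at this
    linarith [neg_abs_le (re ⟪ψ T, φ T⟫_ℂ - 1)]
  rw [← Real.sqrt_sq (norm_nonneg _)]
  refine Real.sqrt_le_sqrt ?_
  rw [@norm_sub_sq ℂ, hψ1 T hT', hφ1 T hT', one_pow, RCLike.re_to_complex]
  linarith

end SchrodingerEquation

theorem schrodinger_evolution_deviation_bound_general
    (n : ℕ) (T δ : ℝ) (hT : 0 ≤ T)
    (H H' : ℝ → Matrix (Fin n) (Fin n) ℂ)
    (hH : ∀ t ∈ Set.Icc (0 : ℝ) T, (H t).IsHermitian)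
    (hH' : ∀ t ∈ Set.Icc (0 : ℝ) T, (H' t).IsHermitian)
    (ψ ψ' : ℝ → EuclideanSpace ℂ (Fin n))
    (hψ : ∀ t ∈ Set.Icc (0 : ℝ) T,
      HasDerivAt ψ ((-Complex.I) • (WithLp.toLp 2 ((H t).mulVec (ψ t)) : EuclideanSpace ℂ (Fin n))) t)
    (hψ' : ∀ t ∈ Set.Icc (0 : ℝ) T,
      HasDerivAt ψ' ((-Complex.I) • (WithLp.toLp 2 ((H' t).mulVec (ψ' t)) : EuclideanSpace ℂ (Fin n))) t)
    (h0 : ψ 0 = ψ' 0) (hnorm : ‖ψ 0‖ = 1)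
    (hclose : ∀ t ∈ Set.Icc (0 : ℝ) T, ‖H t - H' t‖ ≤ δ) :
    ‖ψ T - ψ' T‖ ≤ Real.sqrt (2 * T * δ) :=
  norm_sub_le_sqrt_of_schrodinger (A := fun t => Matrix.toEuclideanCLM (𝕜 := ℂ) (n := Fin n) (H t))
    (B := fun t => Matrix.toEuclideanCLM (𝕜 := ℂ) (n := Fin n) (H' t)) hT
    (fun t ht => Matrix.isSymmetric_toEuclideanLin_iff.2 (hH t ht))
    (fun t ht => Matrix.isSymmetric_toEuclideanLin_iff.2 (hH' t ht)) hψ hψ' h0 hnorm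
    (fun t ht => by simpa only [← map_sub, ← Matrix.cstar_norm_def] using hclose t ht)

/-- If two time-dependent Hamiltonians stay within spectral distance `δ` of each other on
`[0, T]`, then the solutions of the corresponding Schrödinger equations, starting from the same
normalized initial state, stay within `√(2 T δ)` of each other at time `T`. -/
theorem schrodinger_evolution_deviation_bound
    (n : ℕ) (hn : 0 < n) (T δ : ℝ) (hT : 0 ≤ T) (hδ : 0 ≤ δ)
    (H H' : ℝ → Matrix (Fin n) (Fin n) ℂ)
    (hH : ∀ t ∈ Set.Icc (0 : ℝ) T, (H t).IsHermitian)
    (hH' : ∀ t ∈ Set.Icc (0 : ℝ) T, (H' t).IsHermitian)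
    (ψ ψ' : ℝ → EuclideanSpace ℂ (Fin n))
    (hψ : ∀ t ∈ Set.Icc (0 : ℝ) T,
      HasDerivAt ψ ((-Complex.I) • (WithLp.toLp 2 ((H t).mulVec (ψ t)) : EuclideanSpace ℂ (Fin n))) t)
    (hψ' : ∀ t ∈ Set.Icc (0 : ℝ) T,
      HasDerivAt ψ' ((-Complex.I) • (WithLp.toLp 2 ((H' t).mulVec (ψ' t)) : EuclideanSpace ℂ (Fin n))) t)
    (h0 : ψ 0 = ψ' 0) (hnorm : ‖ψ 0‖ = 1)
    (hclose : ∀ t ∈ Set.Icc (0 : ℝ) T, ‖H t - H' t‖ ≤ δ) :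
    ‖ψ T - ψ' T‖ ≤ Real.sqrt (2 * T * δ) :=
  schrodinger_evolution_deviation_bound_general n T δ hT H H' hH hH' ψ ψ' hψ hψ' h0 hnorm hclose
end

section
/- Let E be a complex inner product space and let v₀, v₁ ∈ E satisfy ‖v₀‖ = 1 and Re⟪v₀, v₁⟫ ≥ 0. Then for every s ∈ [0,1], ‖(1−s) • v₀ + s • v₁‖² ≥ ‖v₁‖² / (‖v₁‖² + 1). -/
open scoped InnerProductSpace

/-- Equality holds at `s = 1 / (c + 1)`: the difference times `c + 1` is `((c + 1) * s - 1) ^ 2`. -/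
lemma div_add_one_le_one_sub_sq_add_mul_sq {c : ℝ} (hc : 0 ≤ c) (s : ℝ) :
    c / (c + 1) ≤ (1 - s) ^ 2 + c * s ^ 2 := by
  rw [div_le_iff₀ (by linarith)]
  nlinarith [sq_nonneg ((c + 1) * s - 1)]

lemma sq_mul_norm_sq_add_sq_mul_norm_sq_le_norm_smul_add_smul_sq
    {F : Type*} [NormedAddCommGroup F] [InnerProductSpace ℝ F] {x y : F} (hxy : 0 ≤ ⟪x, y⟫_ℝ)
    {a b : ℝ} (hab : 0 ≤ a * b) :
    a ^ 2 * ‖x‖ ^ 2 + b ^ 2 * ‖y‖ ^ 2 ≤ ‖a • x + b • y‖ ^ 2 := by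
  rw [norm_add_sq_real, real_inner_smul_left, real_inner_smul_right, norm_smul, norm_smul,
    Real.norm_eq_abs, Real.norm_eq_abs, mul_pow, mul_pow, sq_abs, sq_abs]
  nlinarith [mul_nonneg hab hxy]

/-- Spectral gap lower bound: for unit `v₀` with `Re⟪v₀, v₁⟫ ≥ 0`, the interpolated vector
`v_s = (1-s)•v₀ + s•v₁` satisfies `‖v_s‖² ≥ ‖v₁‖²/(‖v₁‖² + 1)` for every `s ∈ [0,1]`. -/
theorem interpolated_norm_sq_lower_bound
    {E : Type*} [NormedAddCommGroup E] [InnerProductSpace ℂ E]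
    (v₀ v₁ : E) (h0 : ‖v₀‖ = 1) (hre : 0 ≤ (⟪v₀, v₁⟫_ℂ).re) :
    ∀ s ∈ Set.Icc (0 : ℝ) 1,
      ‖v₁‖ ^ 2 / (‖v₁‖ ^ 2 + 1) ≤ ‖(1 - s) • v₀ + s • v₁‖ ^ 2 := by
  rintro s ⟨hs0, hs1⟩
  let _ := InnerProductSpace.rclikeToReal ℂ E
  have hreal : 0 ≤ ⟪v₀, v₁⟫_ℝ := by rwa [real_inner_eq_re_inner ℂ]
  have hcoef : 0 ≤ (1 - s) * s := mul_nonneg (by linarith) hs0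
  calc ‖v₁‖ ^ 2 / (‖v₁‖ ^ 2 + 1) ≤ (1 - s) ^ 2 + ‖v₁‖ ^ 2 * s ^ 2 :=
        div_add_one_le_one_sub_sq_add_mul_sq (sq_nonneg _) s
    _ = (1 - s) ^ 2 * ‖v₀‖ ^ 2 + s ^ 2 * ‖v₁‖ ^ 2 := by rw [h0]; ring
    _ ≤ ‖(1 - s) • v₀ + s • v₁‖ ^ 2 :=
        sq_mul_norm_sq_add_sq_mul_norm_sq_le_norm_smul_add_smul_sq hreal hcoef
end

section
/- Let E be a complex inner product space and let v₀, v₁ ∈ E satisfy ‖v₀‖ = 1, Re⟪v₀, v₁⟫ ≥ 0 and v₁ ≠ 0. For s ∈ [0,1] set v_s = (1−s) • v₀ + s • v₁ and v' = v₁ − v₀. Then for every s ∈ [0,1] and every x ∈ E, ‖⟪v_s, x⟫ • v' + ⟪v', x⟫ • v_s‖ ≤ (2 (‖v₁‖² + 1)² / ‖v₁‖³) · ‖v_s‖⁴ · ‖x‖. -/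
/-!
The derivative is the symmetrised rank-two operator `x ↦ ⟪v_s, x⟫ • v' + ⟪v', x⟫ • v_s`, of norm
at most `2 ‖v_s‖ ‖v'‖`, so it suffices to show `‖v'‖ ≤ ((‖v₁‖² + 1)² / ‖v₁‖³) ‖v_s‖³`.
Since `Re⟪v₀, v₁⟫ ≥ 0`, the angle between `v₀` and `v₁` is at most a right angle, whence
`‖v'‖² ≤ ‖v₁‖² + 1` and `‖v_s‖² ≥ (1 - s)² + s² ‖v₁‖² ≥ ‖v₁‖² / (‖v₁‖² + 1)`; the constant is
exactly the one for which these two estimates combine.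
-/

open scoped InnerProductSpace

section InnerProductSpace

variable {𝕜 E : Type*} [RCLike 𝕜] [NormedAddCommGroup E] [InnerProductSpace 𝕜 E]

theorem norm_inner_smul_add_inner_smul_le (u w x : E) :
    ‖⟪u, x⟫_𝕜 • w + ⟪w, x⟫_𝕜 • u‖ ≤ 2 * ‖u‖ * ‖w‖ * ‖x‖ :=
  calc ‖⟪u, x⟫_𝕜 • w + ⟪w, x⟫_𝕜 • u‖ ≤ ‖⟪u, x⟫_𝕜‖ * ‖w‖ + ‖⟪w, x⟫_𝕜‖ * ‖u‖ := by
        rw [← norm_smul, ← norm_smul]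
        exact norm_add_le _ _
    _ ≤ ‖u‖ * ‖x‖ * ‖w‖ + ‖w‖ * ‖x‖ * ‖u‖ := by
        gcongr <;> exact norm_inner_le_norm _ _
    _ = 2 * ‖u‖ * ‖w‖ * ‖x‖ := by ring

theorem norm_sq_add_norm_sq_le_norm_add_sq {x y : E} (h : 0 ≤ RCLike.re ⟪x, y⟫_𝕜) :
    ‖x‖ ^ 2 + ‖y‖ ^ 2 ≤ ‖x + y‖ ^ 2 := by
  rw [norm_add_sq (𝕜 := 𝕜)]
  linarith

theorem norm_sub_sq_le_norm_sq_add_norm_sq {x y : E} (h : 0 ≤ RCLike.re ⟪x, y⟫_𝕜) :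
    ‖x - y‖ ^ 2 ≤ ‖x‖ ^ 2 + ‖y‖ ^ 2 := by
  rw [norm_sub_sq (𝕜 := 𝕜)]
  linarith

theorem re_inner_smul_smul [Module ℝ E] [IsScalarTower ℝ 𝕜 E] (r t : ℝ) (x y : E) :
    RCLike.re ⟪r • x, t • y⟫_𝕜 = r * t * RCLike.re ⟪x, y⟫_𝕜 := by
  rw [RCLike.real_smul_eq_coe_smul (K := 𝕜) r, RCLike.real_smul_eq_coe_smul (K := 𝕜) t,
    inner_smul_left, inner_smul_right, RCLike.conj_ofReal, mul_assoc, RCLike.re_ofReal_mul,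
    RCLike.re_ofReal_mul, ← mul_assoc]

end InnerProductSpace

/-- The minimum over `s` of `(1 - s)² + s² a`, attained at `s = 1 / (a + 1)`. -/
theorem div_add_one_le_one_sub_sq_add_sq_mul {a : ℝ} (ha : 0 ≤ a) (s : ℝ) :
    a / (a + 1) ≤ (1 - s) ^ 2 + s ^ 2 * a := by
  rw [div_le_iff₀ (by positivity)]
  nlinarith [sq_nonneg ((a + 1) * s - 1)]

theorem le_sq_div_pow_three_mul_pow_three {b c d n : ℝ} (hb : 0 < b) (hc : 0 < c) (hn : 0 ≤ n)
    (hd : d ^ 2 ≤ c) (hgap : b ^ 2 / c ≤ n ^ 2) : d ≤ c ^ 2 / b ^ 3 * n ^ 3 := by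
  refine (le_abs_self d).trans (abs_le_of_sq_le_sq ?_ (by positivity))
  calc d ^ 2 ≤ c := hd
    _ = (c ^ 2 / b ^ 3) ^ 2 * (b ^ 2 / c) ^ 3 := by field_simp
    _ ≤ (c ^ 2 / b ^ 3) ^ 2 * (n ^ 2) ^ 3 := by gcongr
    _ = (c ^ 2 / b ^ 3 * n ^ 3) ^ 2 := by ring

/-- Delay-factor bound: for unit `v₀` with `Re⟪v₀, v₁⟫ ≥ 0` and `v₁ ≠ 0`, setting
`v_s = (1-s)•v₀ + s•v₁` and `v' = v₁ - v₀`, the derivative of the rank-one Hamiltonian,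
`x ↦ ⟪v_s, x⟫•v' + ⟪v', x⟫•v_s`, is bounded by `(2(‖v₁‖²+1)²/‖v₁‖³)·‖v_s‖⁴·‖x‖`. -/
theorem rank_one_hamiltonian_derivative_bound
    {E : Type*} [NormedAddCommGroup E] [InnerProductSpace ℂ E]
    (v₀ v₁ : E) (h0 : ‖v₀‖ = 1) (hre : 0 ≤ (⟪v₀, v₁⟫_ℂ).re) (hv₁ : v₁ ≠ 0) :
    ∀ s ∈ Set.Icc (0 : ℝ) 1, ∀ x : E,
      ‖⟪(1 - s) • v₀ + s • v₁, x⟫_ℂ • (v₁ - v₀) +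
          ⟪v₁ - v₀, x⟫_ℂ • ((1 - s) • v₀ + s • v₁)‖ ≤
        (2 * (‖v₁‖ ^ 2 + 1) ^ 2 / ‖v₁‖ ^ 3) * ‖(1 - s) • v₀ + s • v₁‖ ^ 4 * ‖x‖ := by
  rintro s ⟨hs0, hs1⟩ x
  set vs := (1 - s) • v₀ + s • v₁
  have hgap : ‖v₁‖ ^ 2 / (‖v₁‖ ^ 2 + 1) ≤ ‖vs‖ ^ 2 :=
    calc ‖v₁‖ ^ 2 / (‖v₁‖ ^ 2 + 1) ≤ (1 - s) ^ 2 + s ^ 2 * ‖v₁‖ ^ 2 :=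
          div_add_one_le_one_sub_sq_add_sq_mul (by positivity) s
      _ = ‖(1 - s) • v₀‖ ^ 2 + ‖s • v₁‖ ^ 2 := by
          simp only [norm_smul, h0, mul_pow, Real.norm_eq_abs, sq_abs, mul_one]
      _ ≤ ‖vs‖ ^ 2 := by
          refine norm_sq_add_norm_sq_le_norm_add_sq (𝕜 := ℂ) ?_
          rw [re_inner_smul_smul]
          exact mul_nonneg (mul_nonneg (by linarith) hs0) hre
  have hdiff : ‖v₁ - v₀‖ ^ 2 ≤ ‖v₁‖ ^ 2 + 1 := by
    simpa [h0] using norm_sub_sq_le_norm_sq_add_norm_sq (𝕜 := ℂ) (x := v₁) (y := v₀)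
      (by rwa [inner_re_symm])
  calc _ ≤ 2 * ‖vs‖ * ‖v₁ - v₀‖ * ‖x‖ := norm_inner_smul_add_inner_smul_le _ _ _
    _ ≤ 2 * ‖vs‖ * ((‖v₁‖ ^ 2 + 1) ^ 2 / ‖v₁‖ ^ 3 * ‖vs‖ ^ 3) * ‖x‖ := by
        gcongr
        exact le_sq_div_pow_three_mul_pow_three (norm_pos_iff.mpr hv₁) (by positivity)
          (norm_nonneg _) hdiff hgap
    _ = _ := by ring
end

section
/- Let E be a complex inner product space and let v₀, v₁ ∈ E satisfy ‖v₀‖ = 1 and Re⟪v₀, v₁⟫ ≥ 0. For s ∈ [0,1] set v_s = (1−s) • v₀ + s • v₁, and for a positive integer r let s' = ⌈s·r⌉/r. Then for every s ∈ [0,1] and every x ∈ E, ‖⟪v_s, x⟫ • v_s − ⟪v_{s'}, x⟫ • v_{s'}‖ ≤ (2/r)·(1 + 3‖v₁‖ + 2‖v₁‖²)·‖x‖. -/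
open scoped InnerProductSpace

/-!
Writing `u = v_s`, `w = v_{s'}`, the difference of rank-one maps splits as
`⟪u - w, x⟫ • u + ⟪w, x⟫ • (u - w)`. Both `‖u‖, ‖w‖ ≤ 1 + ‖v₁‖`, and
`‖u - w‖ = |s' - s| ‖v₀ - v₁‖ ≤ (1 + ‖v₁‖) / r` since `0 ≤ s' - s ≤ 1 / r`. This gives the
bound `(2 / r) (1 + ‖v₁‖)²`, which is at most the claimed one.
-/

theorem norm_inner_smul_self_sub_le {𝕜 E : Type*} [RCLike 𝕜] [NormedAddCommGroup E]
    [InnerProductSpace 𝕜 E] (u w x : E) :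
    ‖⟪u, x⟫_𝕜 • u - ⟪w, x⟫_𝕜 • w‖ ≤ (‖u‖ + ‖w‖) * ‖u - w‖ * ‖x‖ := by
  have hsplit : ⟪u, x⟫_𝕜 • u - ⟪w, x⟫_𝕜 • w = ⟪u - w, x⟫_𝕜 • u + ⟪w, x⟫_𝕜 • (u - w) := by
    rw [inner_sub_left]
    module
  calc ‖⟪u, x⟫_𝕜 • u - ⟪w, x⟫_𝕜 • w‖
      ≤ ‖⟪u - w, x⟫_𝕜‖ * ‖u‖ + ‖⟪w, x⟫_𝕜‖ * ‖u - w‖ := by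
        rw [hsplit, ← norm_smul, ← norm_smul]
        exact norm_add_le _ _
    _ ≤ ‖u - w‖ * ‖x‖ * ‖u‖ + ‖w‖ * ‖x‖ * ‖u - w‖ := by
        gcongr <;> exact norm_inner_le_norm _ _
    _ = (‖u‖ + ‖w‖) * ‖u - w‖ * ‖x‖ := by ring

section Segment

variable {E : Type*} [SeminormedAddCommGroup E] [NormedSpace ℝ E]

theorem norm_convexCombination_le_add (v₀ v₁ : E) {t : ℝ} (ht : t ∈ Set.Icc (0 : ℝ) 1) :
    ‖(1 - t) • v₀ + t • v₁‖ ≤ ‖v₀‖ + ‖v₁‖ := by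
  obtain ⟨ht0, ht1⟩ := ht
  calc ‖(1 - t) • v₀ + t • v₁‖ ≤ (1 - t) * ‖v₀‖ + t * ‖v₁‖ := by
        refine (norm_add_le _ _).trans_eq ?_
        rw [norm_smul, norm_smul, Real.norm_of_nonneg (by linarith), Real.norm_of_nonneg ht0]
    _ ≤ ‖v₀‖ + ‖v₁‖ := by nlinarith [norm_nonneg v₀, norm_nonneg v₁]

theorem norm_convexCombination_sub_convexCombination (v₀ v₁ : E) (s t : ℝ) :
    ‖((1 - s) • v₀ + s • v₁) - ((1 - t) • v₀ + t • v₁)‖ = |t - s| * ‖v₀ - v₁‖ := by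
  rw [show ((1 - s) • v₀ + s • v₁) - ((1 - t) • v₀ + t • v₁) = (t - s) • (v₀ - v₁) by module,
    norm_smul, Real.norm_eq_abs]

end Segment

section CeilGrid

variable {s : ℝ} {r : ℕ}

theorem natCeil_mul_div_mem_Icc (hs : s ∈ Set.Icc (0 : ℝ) 1) :
    (⌈s * r⌉₊ : ℝ) / r ∈ Set.Icc (0 : ℝ) 1 := by
  refine ⟨by positivity, div_le_one_of_le₀ ?_ r.cast_nonneg⟩
  exact_mod_cast Nat.ceil_le.2 (mul_le_of_le_one_left r.cast_nonneg hs.2)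

theorem abs_natCeil_mul_div_sub_le (hr : 0 < r) (hs : 0 ≤ s) :
    |(⌈s * r⌉₊ : ℝ) / r - s| ≤ 1 / r := by
  have hr' : (0 : ℝ) < r := by exact_mod_cast hr
  have hle : s * r ≤ ⌈s * r⌉₊ := Nat.le_ceil _
  have hlt : (⌈s * r⌉₊ : ℝ) < s * r + 1 := Nat.ceil_lt_add_one (by positivity)
  have hlo : s ≤ (⌈s * r⌉₊ : ℝ) / r := (le_div_iff₀ hr').2 hle
  have hhi : (⌈s * r⌉₊ : ℝ) / r ≤ s + 1 / r := by
    rw [div_le_iff₀ hr', add_mul, one_div_mul_cancel hr'.ne']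
    exact hlt.le
  rw [abs_of_nonneg (sub_nonneg.2 hlo)]
  linarith

end CeilGrid

theorem adiabatic_discretization_error_bound_general
    {E : Type*} [NormedAddCommGroup E] [InnerProductSpace ℂ E]
    (v₀ v₁ : E) (h0 : ‖v₀‖ = 1)
    (r : ℕ) (hr : 0 < r) :
    ∀ s ∈ Set.Icc (0 : ℝ) 1, ∀ x : E,
      ‖⟪(1 - s) • v₀ + s • v₁, x⟫_ℂ • ((1 - s) • v₀ + s • v₁) -
          ⟪(1 - (⌈s * r⌉₊ : ℝ) / r) • v₀ + ((⌈s * r⌉₊ : ℝ) / r) • v₁, x⟫_ℂ •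
            ((1 - (⌈s * r⌉₊ : ℝ) / r) • v₀ + ((⌈s * r⌉₊ : ℝ) / r) • v₁)‖ ≤
        (2 / r) * (1 + 3 * ‖v₁‖ + 2 * ‖v₁‖ ^ 2) * ‖x‖ := by
  intro s hs x
  set t : ℝ := (⌈s * r⌉₊ : ℝ) / r
  have hdiff : ‖v₀ - v₁‖ ≤ 1 + ‖v₁‖ := h0 ▸ norm_sub_le v₀ v₁
  calc _ ≤ (‖(1 - s) • v₀ + s • v₁‖ + ‖(1 - t) • v₀ + t • v₁‖)
          * (|t - s| * ‖v₀ - v₁‖) * ‖x‖ := by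
        rw [← norm_convexCombination_sub_convexCombination]
        exact norm_inner_smul_self_sub_le _ _ x
    _ ≤ ((1 + ‖v₁‖) + (1 + ‖v₁‖)) * (1 / r * (1 + ‖v₁‖)) * ‖x‖ := by
        gcongr
        · exact h0 ▸ norm_convexCombination_le_add v₀ v₁ hs
        · exact h0 ▸ norm_convexCombination_le_add v₀ v₁ (natCeil_mul_div_mem_Icc hs)
        · exact abs_natCeil_mul_div_sub_le hr hs.1
    _ ≤ (2 / r) * (1 + 3 * ‖v₁‖ + 2 * ‖v₁‖ ^ 2) * ‖x‖ := by
        rw [show ((1 + ‖v₁‖) + (1 + ‖v₁‖)) * (1 / r * (1 + ‖v₁‖))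
          = 2 / r * (1 + 2 * ‖v₁‖ + ‖v₁‖ ^ 2) by ring]
        gcongr 2 / r * ?_ * ‖x‖
        nlinarith [norm_nonneg v₁]

/-- Adiabatic discretization error bound: for unit `v₀` with `Re⟪v₀, v₁⟫ ≥ 0`, setting
`v_s = (1-s)•v₀ + s•v₁` and `s' = ⌈s·r⌉/r`, the rank-one Hamiltonians `x ↦ ⟪v_s, x⟫•v_s`
and `x ↦ ⟪v_{s'}, x⟫•v_{s'}` deviate by at most `(2/r)(1 + 3‖v₁‖ + 2‖v₁‖²)` in operator
norm. -/
theorem adiabatic_discretization_error_bound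
    {E : Type*} [NormedAddCommGroup E] [InnerProductSpace ℂ E]
    (v₀ v₁ : E) (h0 : ‖v₀‖ = 1) (hre : 0 ≤ (⟪v₀, v₁⟫_ℂ).re)
    (r : ℕ) (hr : 0 < r) :
    ∀ s ∈ Set.Icc (0 : ℝ) 1, ∀ x : E,
      ‖⟪(1 - s) • v₀ + s • v₁, x⟫_ℂ • ((1 - s) • v₀ + s • v₁) -
          ⟪(1 - (⌈s * r⌉₊ : ℝ) / r) • v₀ + ((⌈s * r⌉₊ : ℝ) / r) • v₁, x⟫_ℂ •
            ((1 - (⌈s * r⌉₊ : ℝ) / r) • v₀ + ((⌈s * r⌉₊ : ℝ) / r) • v₁)‖ ≤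
        (2 / r) * (1 + 3 * ‖v₁‖ + 2 * ‖v₁‖ ^ 2) * ‖x‖ :=
  adiabatic_discretization_error_bound_general v₀ v₁ h0 r hr
end

section
/- Let a < b be real numbers and let f : ℝ → ℂ be continuous on [a,b] with f not identically zero on [a,b]. For each positive integer N and grid points x_k = a + k(b−a)/N (k = 0,…,N−1), define M_N = max_{0 ≤ k < N} ‖f(x_k)‖² and S_N = Σ_{k=0}^{N−1} ‖f(x_k)‖². Then the sequence N·M_N/S_N converges, as N → ∞, to (b−a)·(sup_{x ∈ [a,b]} ‖f(x)‖)² / ∫_a^b ‖f(x)‖² dx. -/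
/-!
Once the mesh `(b - a) / N` is below the modulus of uniform continuity of `‖f‖²` on `[a, b]`
for `ε`, the value of `‖f‖²` on each grid cell is `ε`-close to its value at the left endpoint.
The maximum of `‖f‖` is attained at some `c`, which lies in one of the cells, so the grid
maximum `M_N` tends to `max ‖f‖²`; and the left Riemann sum `(b - a) / N · S_N` is within
`(b - a) ε` of `∫ ‖f‖²`. The latter integral is positive because `‖f‖²` is continuous,
nonnegative and somewhere nonzero, so `N M_N / S_N = (b - a) M_N / ((b - a) / N · S_N)`
converges to the stated quotient.
-/

open scoped Topology

open Filter Set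

noncomputable def gridPoint (a b : ℝ) (N k : ℕ) : ℝ := a + k * (b - a) / N

section Grid

variable {a b : ℝ}

section Points

variable {N k : ℕ}

lemma gridPoint_zero : gridPoint a b N 0 = a := by simp [gridPoint]

lemma gridPoint_self (hN : N ≠ 0) : gridPoint a b N N = b := by
  simp [gridPoint, hN]

lemma gridPoint_succ : gridPoint a b N (k + 1) = gridPoint a b N k + (b - a) / N := by
  simp only [gridPoint]; push_cast; ring

lemma gridPoint_mem_Icc (hab : a ≤ b) (hk : k ≤ N) : gridPoint a b N k ∈ Icc a b := by
  have hkN : (k : ℝ) / N ≤ 1 := div_le_one_of_le₀ (by exact_mod_cast hk) N.cast_nonneg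
  have h : (k : ℝ) * (b - a) / N = k / N * (b - a) := by ring
  simp only [gridPoint, mem_Icc, h]
  constructor
  · linarith [mul_nonneg (div_nonneg k.cast_nonneg N.cast_nonneg) (sub_nonneg.2 hab)]
  · linarith [mul_le_of_le_one_left (sub_nonneg.2 hab) hkN]

lemma exists_nat_lt_le_le_add_one {t : ℝ} (ht₀ : 0 ≤ t) (htN : t ≤ N) (hN : 0 < N) :
    ∃ k < N, (k : ℝ) ≤ t ∧ t ≤ k + 1 := by
  rcases htN.lt_or_eq with htN | rfl
  · exact ⟨⌊t⌋₊, (Nat.floor_lt ht₀).2 htN, Nat.floor_le ht₀, (Nat.lt_floor_add_one t).le⟩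
  · exact ⟨N - 1, by omega, by simp [Nat.cast_pred hN], by simp [Nat.cast_pred hN]⟩

lemma exists_gridPoint_le_le (hab : a < b) (hN : 0 < N) {y : ℝ} (hy : y ∈ Icc a b) :
    ∃ k < N, gridPoint a b N k ≤ y ∧ y ≤ gridPoint a b N (k + 1) := by
  have hh : 0 < (b - a) / N := div_pos (sub_pos.2 hab) (Nat.cast_pos.2 hN)
  have hgrid : ∀ k : ℕ, gridPoint a b N k = a + k * ((b - a) / N) := fun k => by
    rw [gridPoint, mul_div_assoc]
  obtain ⟨k, hk, hkt, htk⟩ := exists_nat_lt_le_le_add_one (t := (y - a) / ((b - a) / N))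
    (div_nonneg (sub_nonneg.2 hy.1) hh.le)
    (by rw [div_le_iff₀ hh]; field_simp; linarith [hy.2]) hN
  refine ⟨k, hk, ?_, ?_⟩
  · rw [hgrid]; linarith [(le_div_iff₀ hh).1 hkt]
  · rw [hgrid]; push_cast; linarith [(div_le_iff₀ hh).1 htk]

end Points

lemma eventually_dist_le_on_gridCells {X : Type*} [PseudoMetricSpace X] {g : ℝ → X}
    (hab : a ≤ b) (hg : ContinuousOn g (Icc a b)) {ε : ℝ} (hε : 0 < ε) :
    ∀ᶠ N : ℕ in atTop, ∀ k < N, ∀ t ∈ Icc (gridPoint a b N k) (gridPoint a b N (k + 1)),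
      dist (g t) (g (gridPoint a b N k)) ≤ ε := by
  obtain ⟨δ, hδ, hgδ⟩ :=
    Metric.uniformContinuousOn_iff_le.1 (isCompact_Icc.uniformContinuousOn_of_continuous hg) ε hε
  filter_upwards [(tendsto_const_div_atTop_nhds_zero_nat (b - a)).eventually
    (eventually_le_nhds hδ)] with N hmesh k hk t ht
  have hxk := gridPoint_mem_Icc hab hk.le
  have ht_mem : t ∈ Icc a b := ⟨hxk.1.trans ht.1, ht.2.trans (gridPoint_mem_Icc hab hk).2⟩
  refine hgδ t ht_mem _ hxk ?_
  rw [Real.dist_eq, abs_of_nonneg (sub_nonneg.2 ht.1)]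
  linarith [ht.2, @gridPoint_succ a b N k]

section RiemannSum

variable {E : Type*} [NormedAddCommGroup E] [NormedSpace ℝ E] [CompleteSpace E]

lemma norm_riemannSum_sub_integral_le (hab : a ≤ b) {g : ℝ → E} (hg : ContinuousOn g (Icc a b))
    {N : ℕ} (hN : 0 < N) {ε : ℝ}
    (hosc : ∀ k < N, ∀ t ∈ Icc (gridPoint a b N k) (gridPoint a b N (k + 1)),
      ‖g t - g (gridPoint a b N k)‖ ≤ ε) :
    ‖((b - a) / N) • ∑ k ∈ Finset.range N, g (gridPoint a b N k) - ∫ x in a..b, g x‖ ≤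
      (b - a) * ε := by
  have hh : 0 ≤ (b - a) / N := div_nonneg (sub_nonneg.2 hab) N.cast_nonneg
  have hlen : ∀ k, gridPoint a b N (k + 1) - gridPoint a b N k = (b - a) / N := fun k => by
    rw [gridPoint_succ]; ring
  have hstart : gridPoint a b N 0 = a := gridPoint_zero
  have hend : gridPoint a b N N = b := gridPoint_self hN.ne'
  have hmem : ∀ k ≤ N, gridPoint a b N k ∈ Icc a b := fun k hk => gridPoint_mem_Icc hab hk
  set x := gridPoint a b N
  have hcell : ∀ k, x k ≤ x (k + 1) := fun k => by linarith [hlen k]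
  have hint : ∀ k < N, IntervalIntegrable g MeasureTheory.volume (x k) (x (k + 1)) :=
    fun k hk => (hg.mono <| by
      rw [uIcc_of_le (hcell k)]
      exact Icc_subset_Icc (hmem k hk.le).1 (hmem (k + 1) hk).2).intervalIntegrable
  have hsplit : ∫ t in a..b, g t = ∑ k ∈ Finset.range N, ∫ t in x k..x (k + 1), g t := by
    rw [intervalIntegral.sum_integral_adjacent_intervals hint, hstart, hend]
  have hterm : ∀ k < N,
      ‖((b - a) / N) • g (x k) - ∫ t in x k..x (k + 1), g t‖ ≤ ε * ((b - a) / N) := by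
    intro k hk
    rw [← hlen, ← intervalIntegral.integral_const, ← intervalIntegral.integral_sub
      intervalIntegrable_const (hint k hk)]
    calc ‖∫ t in x k..x (k + 1), g (x k) - g t‖
        ≤ ε * |x (k + 1) - x k| := intervalIntegral.norm_integral_le_of_norm_le_const
          fun t ht => by
            rw [norm_sub_rev]
            exact hosc k hk t (Ioc_subset_Icc_self (uIoc_of_le (hcell k) ▸ ht))
      _ = ε * (x (k + 1) - x k) := by rw [abs_of_nonneg (sub_nonneg.2 (hcell k))]
  calc ‖((b - a) / N) • ∑ k ∈ Finset.range N, g (x k) - ∫ t in a..b, g t‖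
      = ‖∑ k ∈ Finset.range N, (((b - a) / N) • g (x k) - ∫ t in x k..x (k + 1), g t)‖ := by
        rw [hsplit, Finset.smul_sum, Finset.sum_sub_distrib]
    _ ≤ ∑ k ∈ Finset.range N, ε * ((b - a) / N) :=
        norm_sum_le_of_le _ fun k hk => hterm k (Finset.mem_range.1 hk)
    _ = (b - a) * ε := by
        rw [Finset.sum_const, Finset.card_range, nsmul_eq_mul]
        field_simp

theorem tendsto_riemannSum_gridPoint (hab : a ≤ b) {g : ℝ → E} (hg : ContinuousOn g (Icc a b)) :
    Tendsto (fun N : ℕ => ((b - a) / N) • ∑ k ∈ Finset.range N, g (gridPoint a b N k)) atTop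
      (𝓝 (∫ x in a..b, g x)) := by
  rcases hab.eq_or_lt with rfl | hab'
  · simp
  refine Metric.tendsto_nhds.2 fun ε hε => ?_
  have hε' : 0 < ε / 2 / (b - a) := by have := sub_pos.2 hab'; positivity
  filter_upwards [eventually_gt_atTop 0, eventually_dist_le_on_gridCells hab hg hε']
    with N hN hosc
  rw [dist_eq_norm]
  calc _ ≤ (b - a) * (ε / 2 / (b - a)) := norm_riemannSum_sub_integral_le hab hg hN
          fun k hk t ht => dist_eq_norm (g t) _ ▸ hosc k hk t ht
    _ < ε := by rw [mul_div_cancel₀ _ (sub_pos.2 hab').ne']; linarith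

end RiemannSum

theorem tendsto_iSup_gridPoint (hab : a < b) {g : ℝ → ℝ} (hg : ContinuousOn g (Icc a b))
    {c : ℝ} (hc : c ∈ Icc a b) (hmax : IsMaxOn g (Icc a b) c) :
    Tendsto (fun N : ℕ => ⨆ k : Fin N, g (gridPoint a b N k)) atTop (𝓝 (g c)) := by
  refine Metric.tendsto_nhds.2 fun ε hε => ?_
  filter_upwards [eventually_gt_atTop 0, eventually_dist_le_on_gridCells hab.le hg (half_pos hε)]
    with N hN hosc
  obtain ⟨k, hk, hck⟩ := exists_gridPoint_le_le hab hN hc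
  have : Nonempty (Fin N) := ⟨⟨0, hN⟩⟩
  have hle : ⨆ i : Fin N, g (gridPoint a b N i) ≤ g c :=
    ciSup_le fun i => hmax (gridPoint_mem_Icc hab.le i.2.le)
  have hge : g (gridPoint a b N k) ≤ ⨆ i : Fin N, g (gridPoint a b N i) :=
    le_ciSup (f := fun i : Fin N => g (gridPoint a b N i)) (Set.finite_range _).bddAbove ⟨k, hk⟩
  have hclose := abs_le.1 (Real.dist_eq _ _ ▸ hosc k hk c hck)
  rw [Real.dist_eq, abs_sub_lt_iff]
  constructor <;> linarith

end Grid

/-- For a continuous, not identically zero `f : ℝ → ℂ` on `[a,b]`, the quantity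
`N · max_k ‖f(x_k)‖² / Σ_k ‖f(x_k)‖²` on the uniform `N`-point grid converges to
`(b-a)·(sup_{[a,b]} ‖f‖)² / ∫_a^b ‖f‖²`. -/
theorem pointwise_encoded_max_amplitude_tendsto
    (a b : ℝ) (hab : a < b) (f : ℝ → ℂ)
    (hf : ContinuousOn f (Set.Icc a b))
    (hne : ∃ x ∈ Set.Icc a b, f x ≠ 0) :
    Filter.Tendsto
      (fun N : ℕ =>
        (N : ℝ) * (⨆ k : Fin N, ‖f (a + k * (b - a) / N)‖ ^ 2) /
          ∑ k ∈ Finset.range N, ‖f (a + k * (b - a) / N)‖ ^ 2)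
      Filter.atTop
      (𝓝 ((b - a) * (sSup ((fun x => ‖f x‖) '' Set.Icc a b)) ^ 2 /
        ∫ x in a..b, ‖f x‖ ^ 2)) := by
  have hg : ContinuousOn (fun x => ‖f x‖ ^ 2) (Icc a b) := hf.norm.pow 2
  obtain ⟨c, hc, hmax⟩ := isCompact_Icc.exists_isMaxOn (nonempty_Icc.2 hab.le) hf.norm
  have hsup : sSup ((fun x => ‖f x‖) '' Icc a b) = ‖f c‖ :=
    IsGreatest.csSup_eq ⟨mem_image_of_mem _ hc, forall_mem_image.2 hmax⟩
  have hmax_sq : IsMaxOn (fun x => ‖f x‖ ^ 2) (Icc a b) c := fun y hy =>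
    pow_le_pow_left₀ (norm_nonneg _) (hmax hy) 2
  have hint : 0 < ∫ x in a..b, ‖f x‖ ^ 2 :=
    intervalIntegral.integral_pos hab hg (fun _ _ => by positivity)
      (hne.imp fun _ ⟨hx, hfx⟩ => ⟨hx, pow_pos (norm_pos_iff.2 hfx) 2⟩)
  rw [hsup]
  refine (((tendsto_iSup_gridPoint hab hg hc hmax_sq).const_mul (b - a)).div
    (tendsto_riemannSum_gridPoint hab.le hg) hint.ne').congr' ?_
  filter_upwards [eventually_gt_atTop 0] with N hN
  have hratio : ∀ M S : ℝ, (b - a) * M / (((b - a) / N) • S) = N * M / S := fun M S => by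
    have hba : b - a ≠ 0 := (sub_pos.2 hab).ne'
    rw [smul_eq_mul]; field_simp
  -- `gridPoint` unfolds to the grid points written out in the statement
  exact hratio _ _
end

section
/- Let a < b be real numbers and let f : ℝ → ℝ be continuous and nonnegative on [a,b]. For each positive integer N and grid points x_k = a + k(b−a)/N (k = 0,…,N−1), the sequence N · max_{0 ≤ k < N} ∫_{x_k}^{x_k + (b−a)/N} f(x) dx converges, as N → ∞, to (b−a) · sup_{x ∈ [a,b]} f(x). -/
/-!
With `Δ = (b - a) / N`, every cell integral is at most `Δ · f x₀`, where `x₀` maximizes `f` on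
`[a, b]`. Conversely, if `f > m` within `δ` of `x₀` and `Δ < δ`, the cell containing `x₀` has
integral at least `Δ · m`. Multiplying by `N = (b - a) / Δ` squeezes the limit to `(b - a) · f x₀`.
-/

open MeasureTheory Set Filter Topology

section IntervalIntegral

variable {f : ℝ → ℝ} {u v c : ℝ}

lemma intervalIntegral_le_sub_mul (huv : u ≤ v) (hf : IntervalIntegrable f volume u v)
    (hc : ∀ x ∈ Icc u v, f x ≤ c) : ∫ x in u..v, f x ≤ (v - u) * c := by
  simpa using intervalIntegral.integral_mono_on huv hf intervalIntegrable_const hc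

lemma sub_mul_le_intervalIntegral (huv : u ≤ v) (hf : IntervalIntegrable f volume u v)
    (hc : ∀ x ∈ Icc u v, c ≤ f x) : (v - u) * c ≤ ∫ x in u..v, f x := by
  simpa using intervalIntegral.integral_mono_on huv intervalIntegrable_const hf hc

end IntervalIntegral

section UniformGrid

variable {a b h : ℝ} {N : ℕ}

lemma Icc_gridCell_subset (hh : 0 ≤ h) (hb : a + N * h = b) {k : ℕ} (hk : k < N) :
    Icc (a + k * h) (a + k * h + h) ⊆ Icc a b := by
  have hk' : (k : ℝ) + 1 ≤ N := by exact_mod_cast hk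
  apply Icc_subset_Icc <;> nlinarith

lemma exists_mem_gridCell (hh : 0 < h) (hN : 0 < N) (hb : a + N * h = b) {x : ℝ}
    (hx : x ∈ Icc a b) : ∃ k : Fin N, x ∈ Icc (a + k * h) (a + k * h + h) := by
  set m := ⌊(x - a) / h⌋₊
  have hm_le : (m : ℝ) * h ≤ x - a :=
    (le_div_iff₀ hh).1 (Nat.floor_le (div_nonneg (sub_nonneg.2 hx.1) hh.le))
  refine ⟨⟨min m (N - 1), by omega⟩, ?_, ?_⟩
  · have hkm : ((min m (N - 1) : ℕ) : ℝ) * h ≤ m * h :=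
      mul_le_mul_of_nonneg_right (by exact_mod_cast min_le_left m (N - 1)) hh.le
    dsimp only
    linarith
  · rcases le_total m (N - 1) with hmN | hmN
    · have hlt : x - a < (m + 1) * h := (div_lt_iff₀ hh).1 (Nat.lt_floor_add_one _)
      simp only [min_eq_left hmN]
      linarith
    · have hlast : ((N - 1 : ℕ) : ℝ) * h + h = N * h := by
        rw [Nat.cast_sub hN, Nat.cast_one]; ring
      simp only [min_eq_right hmN]
      linarith [hx.2]

variable {f : ℝ → ℝ}

lemma ciSup_gridCell_integral_le (hh : 0 ≤ h) (hN : 0 < N) (hb : a + N * h = b)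
    (hf : ContinuousOn f (Icc a b)) {c : ℝ} (hc : ∀ x ∈ Icc a b, f x ≤ c) :
    ⨆ k : Fin N, ∫ x in (a + k * h)..(a + k * h + h), f x ≤ h * c := by
  have : Nonempty (Fin N) := ⟨⟨0, hN⟩⟩
  refine ciSup_le fun k => ?_
  have hsub := Icc_gridCell_subset hh hb k.2
  simpa using intervalIntegral_le_sub_mul (by linarith)
    ((hf.mono hsub).intervalIntegrable_of_Icc (by linarith)) fun x hx => hc x (hsub hx)

lemma le_ciSup_gridCell_integral (hh : 0 < h) (hN : 0 < N) (hb : a + N * h = b)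
    (hf : ContinuousOn f (Icc a b)) {x₀ c : ℝ} (hx₀ : x₀ ∈ Icc a b)
    (hc : ∀ x ∈ Icc a b, dist x x₀ ≤ h → c ≤ f x) :
    h * c ≤ ⨆ k : Fin N, ∫ x in (a + k * h)..(a + k * h + h), f x := by
  obtain ⟨k, hk⟩ := exists_mem_gridCell hh hN hb hx₀
  have hsub := Icc_gridCell_subset hh.le hb k.2
  have hcell : h * c ≤ ∫ x in (a + k * h)..(a + k * h + h), f x := by
    simpa using sub_mul_le_intervalIntegral (by linarith)
      ((hf.mono hsub).intervalIntegrable_of_Icc (by linarith)) fun x hx =>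
        hc x (hsub hx) (Real.dist_le_of_mem_Icc hx hk |>.trans (by simp))
  exact le_ciSup_of_le (finite_range _).bddAbove k hcell

end UniformGrid

theorem integral_encoded_max_amplitude_tendsto_general
    (a b : ℝ) (hab : a < b) (f : ℝ → ℝ)
    (hf : ContinuousOn f (Set.Icc a b)) :
    Filter.Tendsto
      (fun N : ℕ =>
        (N : ℝ) *
          ⨆ k : Fin N,
            ∫ x in (a + k * (b - a) / N)..(a + k * (b - a) / N + (b - a) / N), f x)
      Filter.atTop (𝓝 ((b - a) * sSup (f '' Set.Icc a b))) := by
  obtain ⟨x₀, hx₀, hmax⟩ := isCompact_Icc.exists_isMaxOn (nonempty_Icc.2 hab.le) hf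
  have hsup : sSup (f '' Icc a b) = f x₀ :=
    IsGreatest.csSup_eq ⟨mem_image_of_mem f hx₀, forall_mem_image.2 hmax⟩
  have hba : 0 < b - a := sub_pos.2 hab
  have hgrid : ∀ N : ℕ, 0 < N → a + N * ((b - a) / N) = b := fun N hN => by
    field_simp; ring
  simp_rw [hsup, mul_div_assoc]
  refine tendsto_order.2 ⟨fun c hc => ?_, fun c hc => ?_⟩
  · obtain ⟨m, hcm, hmM⟩ := exists_between ((div_lt_iff₀' hba).2 hc)
    obtain ⟨δ, hδ, hfm⟩ := Metric.mem_nhdsWithin_iff.1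
      ((hf x₀ hx₀).eventually_const_lt hmM)
    filter_upwards [eventually_gt_atTop 0,
      (tendsto_const_div_atTop_nhds_zero_nat (b - a)).eventually (gt_mem_nhds hδ)]
      with N hN hNδ
    refine lt_of_lt_of_le ?_ (mul_le_mul_of_nonneg_left (le_ciSup_gridCell_integral
      (div_pos hba (by exact_mod_cast hN)) hN (hgrid N hN) hf hx₀
      fun x hx hdist => (hfm ⟨hdist.trans_lt hNδ, hx⟩).le) N.cast_nonneg)
    rw [← mul_assoc, mul_div_cancel₀ _ (by positivity)]
    exact (div_lt_iff₀' hba).1 hcm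
  · filter_upwards [eventually_gt_atTop 0] with N hN
    refine lt_of_le_of_lt (mul_le_mul_of_nonneg_left (ciSup_gridCell_integral_le
      (div_pos hba (by exact_mod_cast hN)).le hN (hgrid N hN) hf hmax) N.cast_nonneg) ?_
    rwa [← mul_assoc, mul_div_cancel₀ _ (by positivity)]

/-- For a continuous nonnegative `f` on `[a,b]`, the quantity
`N · max_k ∫_{x_k}^{x_k + Δ_N} f` on the uniform `N`-point grid converges to
`(b-a) · sup_{[a,b]} f`. -/
theorem integral_encoded_max_amplitude_tendsto
    (a b : ℝ) (hab : a < b) (f : ℝ → ℝ)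
    (hf : ContinuousOn f (Set.Icc a b))
    (hpos : ∀ x ∈ Set.Icc a b, 0 ≤ f x) :
    Filter.Tendsto
      (fun N : ℕ =>
        (N : ℝ) *
          ⨆ k : Fin N,
            ∫ x in (a + k * (b - a) / N)..(a + k * (b - a) / N + (b - a) / N), f x)
      Filter.atTop (𝓝 ((b - a) * sSup (f '' Set.Icc a b))) :=
  integral_encoded_max_amplitude_tendsto_general a b hab f hf
end

section
/- Let a < b be real numbers and let f : ℝ → ℝ be continuous and nonnegative on [a,b], not identically zero on [a,b]. For each positive integer N and grid points x_k = a + k(b−a)/N (k = 0,…,N−1), the sequence (Σ_{k=0}^{N−1} f(x_k))² / (N · Σ_{k=0}^{N−1} f(x_k)²) converges, as N → ∞, to L = (∫_a^b f)² / ((b−a) · ∫_a^b f²), and moreover L ≥ (∫_a^b f)² / ((b−a)² · (sup_{x ∈ [a,b]} f(x))²). -/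
/-!
After multiplying numerator and denominator by `((b - a) / N) ^ 2`, the fidelity becomes
`R₁(N) ^ 2 / ((b - a) R₂(N))`, where `R₁`, `R₂` are the left Riemann sums of `f` and `f ^ 2` on
the uniform grid; these converge to `∫ f` and `∫ f ^ 2 > 0`. The lower bound is
`∫ f ^ 2 ≤ (b - a) (sup f) ^ 2`.
-/

open scoped Topology

open Filter Finset Set intervalIntegral MeasureTheory

section RiemannSum

variable {E : Type*} [NormedAddCommGroup E] [NormedSpace ℝ E] [CompleteSpace E]

theorem norm_integral_sub_smul_left_le {g : ℝ → E} {u v C : ℝ} (huv : u ≤ v)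
    (hg : IntervalIntegrable g volume u v) (hC : ∀ x ∈ Ioc u v, ‖g x - g u‖ ≤ C) :
    ‖(∫ x in u..v, g x) - (v - u) • g u‖ ≤ C * (v - u) := by
  have := norm_integral_le_of_norm_le_const (f := fun x => g x - g u) (by rwa [uIoc_of_le huv])
  rwa [integral_sub hg intervalIntegrable_const, intervalIntegral.integral_const,
    abs_of_nonneg (sub_nonneg.2 huv)] at this

theorem norm_integral_sub_leftRiemannSum_le {g : ℝ → E} {p : ℕ → ℝ} {n : ℕ} {C : ℝ}
    (hp : Monotone p) (hg : ∀ k < n, IntervalIntegrable g volume (p k) (p (k + 1)))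
    (hC : ∀ k < n, ∀ x ∈ Ioc (p k) (p (k + 1)), ‖g x - g (p k)‖ ≤ C) :
    ‖(∫ x in p 0..p n, g x) - ∑ k ∈ range n, (p (k + 1) - p k) • g (p k)‖ ≤
      C * (p n - p 0) := by
  rw [← sum_integral_adjacent_intervals hg, ← sum_sub_distrib]
  calc _ ≤ ∑ k ∈ range n, ‖(∫ x in p k..p (k + 1), g x) - (p (k + 1) - p k) • g (p k)‖ :=
        norm_sum_le _ _
    _ ≤ ∑ k ∈ range n, C * (p (k + 1) - p k) := by
        refine sum_le_sum fun k hk => ?_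
        rw [Finset.mem_range] at hk
        exact norm_integral_sub_smul_left_le (hp k.le_succ) (hg k hk) (hC k hk)
    _ = C * (p n - p 0) := by rw [← mul_sum, sum_range_sub]

theorem uniform_grid_mem_Icc {a b : ℝ} (hab : a ≤ b) {k N : ℕ} (hk : k ≤ N) :
    a + k * (b - a) / N ∈ Icc a b := by
  have hba : 0 ≤ b - a := sub_nonneg.2 hab
  have hk' : (k : ℝ) ≤ N := by exact_mod_cast hk
  have h0 : 0 ≤ k * (b - a) / N := by positivity
  have h1 : k * (b - a) / N ≤ b - a :=
    div_le_of_le_mul₀ (Nat.cast_nonneg N) hba (by nlinarith)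
  constructor <;> linarith

theorem tendsto_uniform_leftRiemannSum_integral {a b : ℝ} (hab : a ≤ b)
    {g : ℝ → E} (hg : ContinuousOn g (Icc a b)) :
    Tendsto (fun N : ℕ => ((b - a) / N) • ∑ k ∈ range N, g (a + k * (b - a) / N)) atTop
      (𝓝 (∫ x in a..b, g x)) := by
  rw [Metric.tendsto_nhds]
  intro ε hε
  set C := ε / (b - a + 1)
  have hCε : C * (b - a) < ε := by
    rw [div_mul_eq_mul_div, div_lt_iff₀ (by linarith)]
    nlinarith
  obtain ⟨δ, hδ, hgδ⟩ := Metric.uniformContinuousOn_iff.1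
    (isCompact_Icc.uniformContinuousOn_of_continuous hg) C (by positivity)
  filter_upwards [(tendsto_const_div_atTop_nhds_zero_nat (b - a)).eventually (gt_mem_nhds hδ),
    eventually_gt_atTop 0] with N hmesh hN
  set p : ℕ → ℝ := fun k => a + k * (b - a) / N
  have hstep : ∀ k, p (k + 1) - p k = (b - a) / N := fun k => by
    simp only [p]; push_cast; ring
  have hp : Monotone p := monotone_nat_of_le_succ fun k => by
    rw [← sub_nonneg, hstep]; positivity
  have hp0 : p 0 = a := by simp [p]
  have hpN : p N = b := by simp only [p]; field_simp; ring
  have hcell : ∀ k < N, Icc (p k) (p (k + 1)) ⊆ Icc a b := fun k hk =>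
    Icc_subset_Icc (uniform_grid_mem_Icc hab hk.le).1 (uniform_grid_mem_Icc hab hk).2
  have hint : ∀ k < N, IntervalIntegrable g volume (p k) (p (k + 1)) := fun k hk =>
    (hg.mono ((uIcc_of_le (hp k.le_succ)).trans_subset (hcell k hk))).intervalIntegrable
  have hC : ∀ k < N, ∀ x ∈ Ioc (p k) (p (k + 1)), ‖g x - g (p k)‖ ≤ C := by
    intro k hk x hx
    rw [← dist_eq_norm]
    refine (hgδ x (hcell k hk (Ioc_subset_Icc_self hx)) (p k)
      (uniform_grid_mem_Icc hab hk.le) ?_).le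
    rw [Real.dist_eq, abs_of_pos (sub_pos.2 hx.1)]
    linarith [hx.2, hstep k]
  have := norm_integral_sub_leftRiemannSum_le hp hint hC
  simp only [hp0, hpN, hstep, ← smul_sum] at this
  rw [dist_comm, dist_eq_norm]
  exact this.trans_lt hCε

end RiemannSum

theorem sq_div_natCast_mul_eq (N : ℕ) {L : ℝ} (hL : L ≠ 0) (S T : ℝ) :
    S ^ 2 / (N * T) = (L / N * S) ^ 2 / (L * (L / N * T)) := by
  rcases eq_or_ne (N : ℝ) 0 with hN | hN
  · simp [hN]
  rcases eq_or_ne T 0 with hT | hT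
  · simp [hT]
  field_simp

/-- For a continuous nonnegative `f` on `[a,b]`, not identically zero, the fidelity
`(Σ_k f(x_k))² / (N Σ_k f(x_k)²)` on the uniform grid converges to
`L = (∫_a^b f)² / ((b-a) ∫_a^b f²)`, and `L` is bounded below by
`(∫_a^b f)² / ((b-a)² (sup_{[a,b]} f)²)`, i.e. by `𝓕²/(b-a)²` for the filling ratio `𝓕`. -/
theorem fidelity_with_uniform_state_tendsto_and_filling_ratio_bound
    (a b : ℝ) (hab : a < b) (f : ℝ → ℝ)
    (hf : ContinuousOn f (Set.Icc a b))
    (hpos : ∀ x ∈ Set.Icc a b, 0 ≤ f x)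
    (hne : ∃ x ∈ Set.Icc a b, f x ≠ 0) :
    Filter.Tendsto
      (fun N : ℕ =>
        (∑ k ∈ Finset.range N, f (a + k * (b - a) / N)) ^ 2 /
          ((N : ℝ) * ∑ k ∈ Finset.range N, f (a + k * (b - a) / N) ^ 2))
      Filter.atTop
      (𝓝 ((∫ x in a..b, f x) ^ 2 / ((b - a) * ∫ x in a..b, f x ^ 2))) ∧
    (∫ x in a..b, f x) ^ 2 / ((b - a) ^ 2 * (sSup (f '' Set.Icc a b)) ^ 2) ≤
      (∫ x in a..b, f x) ^ 2 / ((b - a) * ∫ x in a..b, f x ^ 2) := by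
  have hba : 0 < b - a := sub_pos.2 hab
  obtain ⟨x₀, hx₀, hfx₀⟩ := hne
  have hf2 : ContinuousOn (fun x => f x ^ 2) (Icc a b) := hf.pow 2
  have hI2 : 0 < ∫ x in a..b, f x ^ 2 :=
    integral_pos hab hf2 (fun x _ => sq_nonneg _) ⟨x₀, hx₀, by positivity⟩
  refine ⟨?_, ?_⟩
  · have h₁ := tendsto_uniform_leftRiemannSum_integral hab.le hf
    have h₂ := tendsto_uniform_leftRiemannSum_integral hab.le hf2
    simp only [smul_eq_mul] at h₁ h₂
    simp only [sq_div_natCast_mul_eq _ hba.ne']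
    exact (h₁.pow 2).div (tendsto_const_nhds.mul h₂) (by positivity)
  · set M := sSup (f '' Icc a b)
    have hfM : ∀ x ∈ Icc a b, f x ^ 2 ≤ M ^ 2 := fun x hx =>
      pow_le_pow_left₀ (hpos x hx) (hf.le_sSup_image_Icc hx) 2
    have hI2M : ∫ x in a..b, f x ^ 2 ≤ (b - a) * M ^ 2 := by
      simpa using integral_mono_on hab.le (hf2.intervalIntegrable_of_Icc hab.le)
        (intervalIntegrable_const (μ := volume)) hfM
    refine div_le_div_of_nonneg_left (sq_nonneg _) (by positivity) ?_
    calc (b - a) * ∫ x in a..b, f x ^ 2 ≤ (b - a) * ((b - a) * M ^ 2) := by gcongr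
      _ = (b - a) ^ 2 * M ^ 2 := by ring
end

section
/- Let N be a positive integer and let A : Matrix (Fin N) (Fin N) ℂ be Hermitian. Define S_A : Matrix (Fin N × Fin N) (Fin N × Fin N) ℂ by S_A (p, q) (r, s) = A q p if q = r and p = s, and 0 otherwise (i.e. S_A = Σ_{j,k} A_{j k} · (|k⟩⟨j| ⊗ |j⟩⟨k|)). Then S_A is Hermitian and its ℓ²→ℓ² operator norm (spectral norm) equals ‖A‖_max = max_{j,k} |A_{j k}|. -/
open scoped Matrix.Norms.L2Operator
open Matrix

/-!
Writing `v (j, k) = A j k` and `σ (j, k) = (k, j)`, the matrix `S` factors as `P_σ * diagonal v`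
with `P_σ` the permutation matrix of `σ`. Permutation matrices are unitary, so the spectral norm
of `S` is that of `diagonal v`, which is the largest `‖v i‖`, i.e. `‖A‖_max`.
-/

theorem pi_norm_eq_ciSup {ι E : Type*} [Fintype ι] [SeminormedAddCommGroup E] (f : ι → E) :
    ‖f‖ = ⨆ i, ‖f i‖ :=
  le_antisymm
    ((pi_norm_le_iff_of_nonneg (Real.iSup_nonneg fun i => norm_nonneg (f i))).2
      fun i => le_ciSup (f := fun i => ‖f i‖) (Set.finite_range _).bddAbove i)
    (Real.iSup_le (norm_le_pi_norm f) (norm_nonneg f))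

namespace Matrix

variable {n 𝕜 : Type*} [Fintype n] [DecidableEq n] [RCLike 𝕜]

theorem permMatrix_mem_unitaryGroup (σ : Equiv.Perm n) : σ.permMatrix 𝕜 ∈ unitaryGroup n 𝕜 := by
  rw [mem_unitaryGroup_iff, star_eq_conjTranspose, conjTranspose_permMatrix, ← permMatrix_mul,
    inv_mul_cancel, permMatrix_one]

theorem l2_opNorm_permMatrix_mul_diagonal (σ : Equiv.Perm n) (v : n → 𝕜) :
    ‖σ.permMatrix 𝕜 * diagonal v‖ = ‖v‖ :=
  (CStarRing.norm_mem_unitary_mul _ (permMatrix_mem_unitaryGroup σ)).trans (l2_opNorm_diagonal v)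

end Matrix

theorem eq_permMatrix_prodComm_mul_diagonal {n R : Type*} [Fintype n] [DecidableEq n]
    [NonAssocSemiring R] (A : Matrix n n R) (S : Matrix (n × n) (n × n) R)
    (hS : ∀ p q r s : n, S (p, q) (r, s) = if q = r ∧ p = s then A q p else 0) :
    S = Equiv.Perm.permMatrix R (Equiv.prodComm n n) * diagonal (fun x => A x.1 x.2) := by
  ext ⟨p, q⟩ ⟨r, s⟩
  rw [hS, PEquiv.toMatrix_toPEquiv_mul, submatrix_apply, diagonal_apply]
  simp

theorem one_sparse_embedding_isHermitian_and_norm_eq_max_entry_general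
    (N : ℕ) (A : Matrix (Fin N) (Fin N) ℂ) (hA : A.IsHermitian)
    (S : Matrix (Fin N × Fin N) (Fin N × Fin N) ℂ)
    (hS : ∀ p q r s : Fin N,
      S (p, q) (r, s) = if q = r ∧ p = s then A q p else 0) :
    S.IsHermitian ∧ ‖S‖ = ⨆ j : Fin N, ⨆ k : Fin N, ‖A j k‖ := by
  refine ⟨?_, ?_⟩
  · ext ⟨p, q⟩ ⟨r, s⟩
    rw [conjTranspose_apply, hS, hS]
    by_cases h : q = r ∧ p = s
    · obtain ⟨rfl, rfl⟩ := h
      simpa using hA.apply q p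
    · rw [if_neg h, if_neg fun h' => h ⟨h'.2.symm, h'.1.symm⟩, star_zero]
  · rw [eq_permMatrix_prodComm_mul_diagonal A S hS, l2_opNorm_permMatrix_mul_diagonal,
      pi_norm_eq_ciSup, ciSup_prod (Set.finite_range _).bddAbove]

/-- The one-sparse embedding `S_A = Σ_{j,k} A_{jk} |k⟩⟨j| ⊗ |j⟩⟨k|` of a Hermitian matrix `A`
is Hermitian, and its spectral norm equals `‖A‖_max = max_{j,k} |A_{jk}|`. -/
theorem one_sparse_embedding_isHermitian_and_norm_eq_max_entry
    (N : ℕ) (hN : 0 < N) (A : Matrix (Fin N) (Fin N) ℂ) (hA : A.IsHermitian)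
    (S : Matrix (Fin N × Fin N) (Fin N × Fin N) ℂ)
    (hS : ∀ p q r s : Fin N,
      S (p, q) (r, s) = if q = r ∧ p = s then A q p else 0) :
    S.IsHermitian ∧ ‖S‖ = ⨆ j : Fin N, ⨆ k : Fin N, ‖A j k‖ :=
  one_sparse_embedding_isHermitian_and_norm_eq_max_entry_general N A hA S hS
end
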